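/- Every nonempty Dyck path of semilength n avoiding DUU can be written uniquely either as QUD or as UQD for some Dyck path Q of semilength n-1 avoiding DUU. -/
import Mathlib


/-- A Dyck path of semilength `n`, encoded as a list of booleans where
`true` is an up step `U = (1,1)` and `false` is a down step `D = (1,-1)`. -/
def IsDyckPath (n : ℕ) (w : List Bool) : Prop :=
  w.length = 2 * n ∧ w.count true = n ∧
    ∀ p : List Bool, p <+: w → p.count false ≤ p.count true

/-- `w` avoids the consecutive pattern `DUU`. -/
def AvoidsDUU (w : List Bool) : Prop := ¬ [false, true, true] <:+: w

/-- `w` avoids `p + 1` consecutive down steps. -/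
def AvoidsDrun (p : ℕ) (w : List Bool) : Prop := ¬ List.replicate (p + 1) false <:+: w

/-- The set `F_n^p` of Dyck paths of semilength `n` avoiding `DUU` and `D^{p+1}`. -/
def Fnp (p n : ℕ) : Set (List Bool) :=
  {w | IsDyckPath n w ∧ AvoidsDUU w ∧ AvoidsDrun p w}

/-- The set `F_n^∞` of Dyck paths of semilength `n` avoiding `DUU`. -/
def Fninf (n : ℕ) : Set (List Bool) := {w | IsDyckPath n w ∧ AvoidsDUU w}

/-- The height of the path `w` after `k` steps. -/
def pathHeight (w : List Bool) (k : ℕ) : ℤ :=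
  ((w.take k).count true : ℤ) - ((w.take k).count false : ℤ)

/-- The Stanley order: `P` lies weakly below `Q`. -/
def StanleyLE (P Q : List Bool) : Prop := ∀ k, pathHeight P k ≤ pathHeight Q k

/-- `Q` is obtained from `P` by replacing one factor `DU` by `UD`
(the covering relation of the Stanley lattice). -/
def CoverRel (P Q : List Bool) : Prop :=
  ∃ a b : List Bool, P = a ++ [false, true] ++ b ∧ Q = a ++ [true, false] ++ b

/-- The number of upper covers of `P` within the set `S`. -/
noncomputable def numUpperCovers (S : Set (List Bool)) (P : List Bool) : ℕ :=
  {Q | Q ∈ S ∧ CoverRel P Q}.ncard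

/-- The number of lower covers of `P` within the set `S`. -/
noncomputable def numLowerCovers (S : Set (List Bool)) (P : List Bool) : ℕ :=
  {Q | Q ∈ S ∧ CoverRel Q P}.ncard

/-- The interval `[P,Q]` inside `S` (with the Stanley order) is boolean:
it is order-isomorphic to `{0,1}^h` for some `h ≥ 0`. -/
def IsBooleanInterval (S : Set (List Bool)) (P Q : List Bool) : Prop :=
  ∃ h : ℕ, Nonempty
    (RelIso (fun R R' : {R : List Bool // R ∈ S ∧ StanleyLE P R ∧ StanleyLE R Q} =>
        StanleyLE R.1 R'.1)
      (fun f g : Fin h → Bool => f ≤ g))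

/-- The interval `[P,Q]` inside `S` is linear: its elements are pairwise comparable. -/
def IsLinearInterval (S : Set (List Bool)) (P Q : List Bool) : Prop :=
  ∀ R R' : List Bool,
    R ∈ S → StanleyLE P R → StanleyLE R Q →
    R' ∈ S → StanleyLE P R' → StanleyLE R' Q →
    StanleyLE R R' ∨ StanleyLE R' R

lemma count_tf (w : List Bool) : w.count true + w.count false = w.length := by
  induction w with
  | nil => simp
  | cons a t ih => cases a <;> simp [List.count_cons] <;> omega

lemma dyck_ends_false {n : ℕ} {w : List Bool} (h : IsDyckPath n w) (hne : w ≠ []) :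
    ∃ x, w = x ++ [false] := by
  obtain ⟨hlen, hct, hpre⟩ := h
  have hw : w.dropLast ++ [w.getLast hne] = w := List.dropLast_append_getLast hne
  cases hlast : w.getLast hne with
  | false => exact ⟨w.dropLast, by conv_lhs => rw [← hw, hlast]⟩
  | true =>
    exfalso
    rw [hlast] at hw
    have hpfx : w.dropLast <+: w := ⟨[true], hw⟩
    have h1 := hpre _ hpfx
    have hcf : w.count false = n := by have := count_tf w; omega
    have h2 : w.count true = w.dropLast.count true + 1 := by
      conv_lhs => rw [← hw]
      simp
    have h3 : w.count false = w.dropLast.count false := by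
      conv_lhs => rw [← hw]
      simp
    have hn : 1 ≤ n := by
      have : w.length ≠ 0 := by simpa using hne
      omega
    omega

lemma no_return {n : ℕ} {P : List Bool} (hP : P ∈ Fninf n) {x : List Bool}
    (hx : P = x ++ [false, false]) :
    ∀ m p, P.length - p.length ≤ m → p <+: P → p ≠ [] → p ≠ P →
      p.count false = p.count true → False := by
  obtain ⟨⟨hlen, hct, hpre⟩, havoid⟩ := hP
  have hcf : P.count false = n := by have := count_tf P; omega
  intro m
  induction m with
  | zero =>
    intro p hm hpfx hne hnp heq
    exact hnp (List.IsPrefix.eq_of_length hpfx (by have := hpfx.length_le; omega))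
  | succ m ih =>
    intro p hm hpfx hne hnp heq
    obtain ⟨rest, hrest⟩ := hpfx
    cases rest with
    | nil => exact hnp (by simpa using hrest)
    | cons c rest' =>
      cases c with
      | false =>
        have hpfx2 : p ++ [false] <+: P := ⟨rest', by simpa using hrest⟩
        have := hpre _ hpfx2
        simp [List.count_append] at this
        omega
      | true =>
        cases rest' with
        | nil =>
          have hPeq : P = p ++ [true] := hrest.symm
          have h1 : P.count true = p.count true + 1 := by rw [hPeq]; simp
          have h2 : P.count false = p.count false := by rw [hPeq]; simp
          omega
        | cons d rest'' =>
          cases d with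
          | true =>
            -- p must end in false, giving a DUU factor
            have hpne := hne
            have hw : p.dropLast ++ [p.getLast hne] = p := List.dropLast_append_getLast hne
            cases hlast : p.getLast hne with
            | true =>
              exfalso
              rw [hlast] at hw
              have hpfx2 : p.dropLast <+: P := (List.IsPrefix.trans ⟨[true], hw⟩ ⟨_, hrest⟩)
              have h1 := hpre _ hpfx2
              have h2 : p.count true = p.dropLast.count true + 1 := by
                conv_lhs => rw [← hw]
                simp
              have h3 : p.count false = p.dropLast.count false := by
                conv_lhs => rw [← hw]
                simp
              omega
            | false =>
              rw [hlast] at hw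
              exact havoid ⟨p.dropLast, rest'', by rw [← hrest, ← hw]; simp⟩
          | false =>
            have hpfx2 : p ++ [true, false] <+: P := ⟨rest'', by simpa using hrest⟩
            have hnp2 : p ++ [true, false] ≠ P := by
              intro hEq
              have := (List.append_inj' (hEq.trans hx) rfl).2
              simp at this
            have heq2 : (p ++ [true, false]).count false = (p ++ [true, false]).count true := by
              simp [List.count_append]
              omega
            exact ih (p ++ [true, false]) (by simp; omega) hpfx2 (by simp) hnp2 heq2

/-- Every nonempty Dyck path avoiding `DUU` can be written uniquely either as
`Q U D` or as `U Q D` with `Q` a Dyck path of semilength `n - 1` avoiding `DUU`. -/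
theorem stmt3 (n : ℕ) (P : List Bool) (hP : P ∈ Fninf n) (hne : P ≠ []) :
    ∃! Q : List Bool, Q ∈ Fninf (n - 1) ∧
      (P = Q ++ [true, false] ∨ P = [true] ++ Q ++ [false]) := by
  obtain ⟨hD, hA⟩ := hP
  obtain ⟨hlen, hct, hpre⟩ := hD
  have hcf : P.count false = n := by have := count_tf P; omega
  have hn : 1 ≤ n := by
    have : P.length ≠ 0 := by simpa using hne
    omega
  -- P ends in false
  obtain ⟨x, hx⟩ := dyck_ends_false ⟨hlen, hct, hpre⟩ hne
  have hxne : x ≠ [] := by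
    intro h
    rw [h] at hx
    simp [hx] at hlen
    omega
  have hw : x.dropLast ++ [x.getLast hxne] = x := List.dropLast_append_getLast hxne
  set y := x.dropLast with hy
  -- uniqueness helper
  have uniq : ∀ Q1 Q2 : List Bool, Q1 ∈ Fninf (n - 1) → Q2 ∈ Fninf (n - 1) →
      (P = Q1 ++ [true, false] ∨ P = [true] ++ Q1 ++ [false]) →
      (P = Q2 ++ [true, false] ∨ P = [true] ++ Q2 ++ [false]) → Q1 = Q2 := by
    have mixed : ∀ Q1 Q2 : List Bool, Q2 ∈ Fninf (n - 1) →
        P = Q1 ++ [true, false] → P = [true] ++ Q2 ++ [false] → Q1 = Q2 := by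
      intro Q1 Q2 hQ2 h1 h2
      have h3 : (Q1 ++ [true]) ++ [false] = (true :: Q2) ++ [false] := by
        simpa using h1.symm.trans h2
      have h4 : Q1 ++ [true] = true :: Q2 := (List.append_inj' h3 rfl).1
      rcases eq_or_ne Q2 [] with rfl | hQne
      · have : Q1 ++ [true] = [] ++ [true] := by simpa using h4
        have := (List.append_inj' this rfl).1
        simp [this]
      · exfalso
        obtain ⟨z, hz⟩ := dyck_ends_false hQ2.1 hQne
        rw [hz] at h4
        have h5 : Q1 ++ [true] = (true :: z) ++ [false] := by simpa using h4
        have := (List.append_inj' h5 rfl).2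
        simp at this
    intro Q1 Q2 hQ1 hQ2 h1 h2
    rcases h1 with h1 | h1 <;> rcases h2 with h2 | h2
    · exact (List.append_inj' (h1.symm.trans h2) rfl).1
    · exact mixed Q1 Q2 hQ2 h1 h2
    · exact (mixed Q2 Q1 hQ1 h2 h1).symm
    · have h3 : true :: (Q1 ++ [false]) = true :: (Q2 ++ [false]) := by
        simpa using h1.symm.trans h2
      have h4 : Q1 ++ [false] = Q2 ++ [false] := by simpa using h3
      exact (List.append_inj' h4 rfl).1
  cases hlast : x.getLast hxne with
  | true =>
    -- P = y ++ [true, false]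
    rw [hlast] at hw
    have hPeq : P = y ++ [true, false] := by rw [hx, ← hw]; simp
    have hQmem : y ∈ Fninf (n - 1) := by
      refine ⟨⟨?_, ?_, ?_⟩, ?_⟩
      · have : P.length = y.length + 2 := by rw [hPeq]; simp
        omega
      · have : P.count true = y.count true + 1 := by rw [hPeq]; simp
        omega
      · intro p hp
        exact hpre p (hp.trans ⟨[true, false], hPeq.symm⟩)
      · intro hinf
        exact hA (hinf.trans ⟨[], [true, false], by simp [hPeq]⟩)
    exact ⟨y, ⟨hQmem, Or.inl hPeq⟩, fun Q' hQ' => uniq Q' y hQ'.1 hQmem hQ'.2 (Or.inl hPeq)⟩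
  | false =>
    -- P = y ++ [false, false]
    rw [hlast] at hw
    have hPeq : P = y ++ [false, false] := by rw [hx, ← hw]; simp
    -- first step of P is true
    obtain ⟨c, t, hct'⟩ := List.exists_cons_of_ne_nil hne
    have hc : c = true := by
      have h1 := hpre [c] ⟨t, hct'.symm⟩
      cases c
      · simp at h1
      · rfl
    subst hc
    -- y is nonempty and starts with true
    have hyne : y ≠ [] := by
      intro h
      rw [h] at hPeq
      rw [hPeq] at hct'
      simp at hct'
    obtain ⟨c', y', hy'⟩ := List.exists_cons_of_ne_nil hyne
    have hc' : c' = true := by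
      rw [hPeq, hy'] at hct'
      simp only [List.cons_append] at hct'
      exact (List.cons_eq_cons.mp hct').1
    subst hc'
    set Q := y' ++ [false] with hQdef
    have hPeq2 : P = [true] ++ Q ++ [false] := by rw [hPeq, hy', hQdef]; simp
    have hQmem : Q ∈ Fninf (n - 1) := by
      refine ⟨⟨?_, ?_, ?_⟩, ?_⟩
      · have : P.length = Q.length + 2 := by rw [hPeq2]; simp
        omega
      · have : P.count true = Q.count true + 1 := by rw [hPeq2]; simp [List.count_append]
        omega
      · intro p hp
        by_contra hcon
        push_neg at hcon
        have hpfx : (true :: p) <+: P := by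
          rw [hPeq2]
          obtain ⟨s, hs⟩ := hp
          exact ⟨s ++ [false], by rw [← hs]; simp⟩
        have hple : p.length ≤ Q.length := hp.length_le
        have hQlen : Q.length + 2 = P.length := by rw [hPeq2]; simp
        have hnp : (true :: p) ≠ P := by
          intro h
          have := congrArg List.length h
          simp at this
          omega
        have h1 := hpre _ hpfx
        simp [List.count_cons] at h1
        have heq : (true :: p).count false = (true :: p).count true := by
          simp [List.count_cons]
          omega
        exact no_return ⟨⟨hlen, hct, hpre⟩, hA⟩ hPeq P.length (true :: p)
          (by omega) hpfx (by simp) hnp heq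
      · intro hinf
        exact hA (hinf.trans ⟨[true], [false], by simp [hPeq2]⟩)
    exact ⟨Q, ⟨hQmem, Or.inr hPeq2⟩, fun Q' hQ' => uniq Q' Q hQ'.1 hQmem hQ'.2 (Or.inr hPeq2)⟩
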